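/- Let Φ₁, …, Φ_N be bare measurement channels on n×n complex matrices and let Φ = Φ_N ∘ ⋯ ∘ Φ₁ be their composition. If ρ is a nonzero n×n complex matrix and λ is a complex number with |λ| = 1 such that Φ(ρ) = λ • ρ, then λ = 1. -/

import Mathlib

/-!
For a bare channel `Φ ρ = ∑ K ρ K` with `K = √E`, the map `Φ` is a positive operator on the
Hilbert–Schmidt space of matrices with `Φ ≤ 1`, because `∑ K² = 1` makes
`2 (1 - Φ) = ∑ [K, ·]²` a sum of squares of symmetric operators. For such an operator `‖Φ ρ‖² ≤ re ⟪Φ ρ, ρ⟫`, which forces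
`‖Φ ρ‖ < ‖ρ‖` unless `Φ ρ = ρ`. This property survives composition, so the composite channel
cannot map `ρ ≠ 0` to `λ ρ` with `|λ| = 1` unless it fixes `ρ`, i.e. `λ = 1`.
-/

open Matrix
open scoped ComplexOrder

/-- The square root of a positive semidefinite matrix, as `Matrix.PosSemidef.sqrt` was defined in
Mathlib (removed since). -/
noncomputable def Matrix.PosSemidef.sqrt {n 𝕜 : Type*} [Fintype n] [DecidableEq n] [RCLike 𝕜]
    {A : Matrix n n 𝕜} (hA : A.PosSemidef) : Matrix n n 𝕜 :=
  hA.1.eigenvectorUnitary.1 * diagonal ((↑) ∘ (√·) ∘ hA.1.eigenvalues) *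
    (star hA.1.eigenvectorUnitary : Matrix n n 𝕜)

/-- A bare measurement channel: `Φ(ρ) = Σ_α √E_α ρ √E_α` for some POVM `(E_α)`. -/
def IsBareChannel {n : ℕ}
    (Φ : Matrix (Fin n) (Fin n) ℂ → Matrix (Fin n) (Fin n) ℂ) : Prop :=
  ∃ (k : ℕ) (E : Fin k → Matrix (Fin n) (Fin n) ℂ)
    (hE : ∀ α, (E α).PosSemidef),
      (∑ α, E α) = 1 ∧ ∀ ρ, Φ ρ = ∑ α, (hE α).sqrt * ρ * (hE α).sqrt

open RCLike
open scoped MatrixOrder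

def ShrinksNonFixedPoints {E : Type*} [Norm E] (f : E → E) : Prop :=
  ∀ x, f x ≠ x → ‖f x‖ < ‖x‖

namespace ShrinksNonFixedPoints

section Norm

variable {E : Type*} [Norm E] {f g : E → E}

theorem norm_apply_le (hf : ShrinksNonFixedPoints f) (x : E) : ‖f x‖ ≤ ‖x‖ := by
  by_cases hx : f x = x
  · rw [hx]
  · exact (hf x hx).le

theorem id : ShrinksNonFixedPoints (id : E → E) := fun _ hx => absurd rfl hx

theorem comp (hg : ShrinksNonFixedPoints g) (hf : ShrinksNonFixedPoints f) :
    ShrinksNonFixedPoints (g ∘ f) := by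
  intro x hx
  by_cases hfx : f x = x
  · rw [Function.comp_apply, hfx] at hx ⊢
    exact hg x hx
  · exact (hg.norm_apply_le (f x)).trans_lt (hf x hfx)

theorem foldl_comp {L : List (E → E)} (hL : ∀ g ∈ L, ShrinksNonFixedPoints g)
    (hf : ShrinksNonFixedPoints f) : ShrinksNonFixedPoints (L.foldl (fun f g => g ∘ f) f) := by
  induction L generalizing f with
  | nil => exact hf
  | cons g L ih =>
    exact ih (fun h hh => hL h (List.mem_cons_of_mem g hh)) ((hL g List.mem_cons_self).comp hf)

end Norm

theorem eq_one_of_apply_eq_smul {𝕜 E : Type*} [NormedField 𝕜] [NormedAddCommGroup E]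
    [NormedSpace 𝕜 E] {f : E → E} (hf : ShrinksNonFixedPoints f) {x : E} (hx : x ≠ 0) {c : 𝕜}
    (hc : ‖c‖ = 1) (hfx : f x = c • x) : c = 1 := by
  have hfix : f x = x := by
    by_contra hne
    have := hf x hne
    rw [hfx, norm_smul, hc, one_mul] at this
    exact this.false
  exact smul_left_injective 𝕜 hx (show c • x = (1 : 𝕜) • x by rw [← hfx, hfix, one_smul])

end ShrinksNonFixedPoints

section InnerProductSpace

variable {𝕜 E : Type*} [RCLike 𝕜] [NormedAddCommGroup E] [InnerProductSpace 𝕜 E]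

theorem shrinksNonFixedPoints_of_norm_sq_le_re_inner {f : E → E}
    (hf : ∀ x, ‖f x‖ ^ 2 ≤ re (inner 𝕜 (f x) x)) : ShrinksNonFixedPoints f := by
  intro x hx
  have hpos : 0 < ‖f x - x‖ ^ 2 := by
    have := norm_pos_iff.mpr (sub_ne_zero.mpr hx)
    positivity
  rw [@norm_sub_sq 𝕜] at hpos
  have := hf x
  exact (pow_lt_pow_iff_left₀ (norm_nonneg _) (norm_nonneg _) two_ne_zero).mp (by linarith)

namespace LinearMap

theorem IsSymmetric.nonneg_mul_self {T : E →ₗ[𝕜] E} (hT : T.IsSymmetric) : 0 ≤ T * T := by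
  refine (nonneg_iff_isPositive _).mpr ⟨fun x y => ?_, fun x => ?_⟩
  · rw [Module.End.mul_apply, Module.End.mul_apply, hT, hT]
  · rw [Module.End.mul_apply, hT]
    exact inner_self_nonneg

/-- The inequality is `T - T² ≥ 0`, read off from `T - T² = (1 - T) T (1 - T) + T (1 - T) T`. -/
theorem norm_sq_apply_le_re_inner {T : E →ₗ[𝕜] E} (hT : 0 ≤ T) (hT1 : T ≤ 1) (x : E) :
    ‖T x‖ ^ 2 ≤ re (inner 𝕜 (T x) x) := by
  rw [nonneg_iff_isPositive] at hT
  rw [le_def] at hT1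
  have h₁ := hT.re_inner_nonneg_left (x - T x)
  have h₂ := hT1.re_inner_nonneg_left (T x)
  have hsymm := hT.isSymmetric (T x) x
  simp only [map_sub, sub_apply, Module.End.one_apply, inner_sub_left, inner_sub_right, hsymm,
    @inner_self_eq_norm_sq 𝕜] at h₁ h₂
  linarith

theorem shrinksNonFixedPoints_of_nonneg_of_le_one {T : E →ₗ[𝕜] E} (hT : 0 ≤ T) (hT1 : T ≤ 1) :
    ShrinksNonFixedPoints T :=
  shrinksNonFixedPoints_of_norm_sq_le_re_inner (norm_sq_apply_le_re_inner hT hT1)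

end LinearMap

end InnerProductSpace

namespace Matrix

variable {𝕜 n : Type*} [RCLike 𝕜] [Fintype n] [DecidableEq n]

theorem PosSemidef.sqrt_eq_cfcSqrt {A : Matrix n n 𝕜} (hA : A.PosSemidef) :
    hA.sqrt = CFC.sqrt A := by
  rw [CFC.sqrt_eq_cfc, cfc_nnreal_eq_real _ A, hA.1.cfc_eq]
  simp only [IsHermitian.cfc, PosSemidef.sqrt, Unitary.conjStarAlgAut_apply, Function.comp_def,
    Real.coe_sqrt, Real.coe_toNNReal', max_eq_left (hA.eigenvalues_nonneg _)]

theorem PosSemidef.posSemidef_sqrt {A : Matrix n n 𝕜} (hA : A.PosSemidef) :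
    hA.sqrt.PosSemidef := by
  rw [hA.sqrt_eq_cfcSqrt]
  exact (CFC.sqrt_nonneg A).posSemidef

theorem PosSemidef.sqrt_mul_self {A : Matrix n n 𝕜} (hA : A.PosSemidef) :
    hA.sqrt * hA.sqrt = A := by
  rw [hA.sqrt_eq_cfcSqrt]
  exact CFC.sqrt_mul_sqrt_self A hA.nonneg

noncomputable abbrev hilbertSchmidtNormedAddCommGroup : NormedAddCommGroup (Matrix n n 𝕜) :=
  toMatrixNormedAddCommGroup 1 PosDef.one

attribute [local instance] hilbertSchmidtNormedAddCommGroup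

noncomputable abbrev hilbertSchmidtInnerProductSpace : InnerProductSpace 𝕜 (Matrix n n 𝕜) :=
  toMatrixInnerProductSpace 1 PosSemidef.one

attribute [local instance] hilbertSchmidtInnerProductSpace

theorem hilbertSchmidt_inner (x y : Matrix n n 𝕜) : inner 𝕜 x y = trace (y * xᴴ) := by
  show trace (y * 1 * xᴴ) = _
  rw [mul_one]

theorem isSymmetric_mulLeft {S : Matrix n n 𝕜} (hS : S.IsHermitian) :
    (LinearMap.mulLeft 𝕜 S).IsSymmetric := by
  intro x y
  simp only [LinearMap.mulLeft_apply, hilbertSchmidt_inner, conjTranspose_mul, hS.eq, mul_assoc]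
  rw [trace_mul_comm S, mul_assoc]

theorem isSymmetric_mulRight {S : Matrix n n 𝕜} (hS : S.IsHermitian) :
    (LinearMap.mulRight 𝕜 S).IsSymmetric := by
  intro x y
  simp only [LinearMap.mulRight_apply, hilbertSchmidt_inner, conjTranspose_mul, hS.eq, mul_assoc]

theorem isSymmetric_mulLeftRight {S : Matrix n n 𝕜} (hS : S.IsHermitian) :
    (LinearMap.mulLeftRight 𝕜 (S, S)).IsSymmetric := by
  intro x y
  simp only [LinearMap.mulLeftRight_apply, hilbertSchmidt_inner, conjTranspose_mul, hS.eq,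
    ← mul_assoc]
  rw [trace_mul_comm]
  simp only [mul_assoc]

variable {ι : Type*} [Fintype ι] {K : ι → Matrix n n 𝕜}

theorem nonneg_sum_mulLeftRight (hK : ∀ i, (K i).PosSemidef) :
    0 ≤ ∑ i, LinearMap.mulLeftRight 𝕜 (K i, K i) := by
  refine Finset.sum_nonneg fun i _ => ?_
  set S := CFC.sqrt (K i)
  have hSS : S * S = K i := CFC.sqrt_mul_sqrt_self (K i) (hK i).nonneg
  have hsq : LinearMap.mulLeftRight 𝕜 (K i, K i) =
      LinearMap.mulLeftRight 𝕜 (S, S) * LinearMap.mulLeftRight 𝕜 (S, S) := by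
    ext x : 1
    simp only [Module.End.mul_apply, LinearMap.mulLeftRight_apply, ← mul_assoc, hSS]
    simp only [mul_assoc, hSS]
  rw [hsq]
  exact (isSymmetric_mulLeftRight (CFC.sqrt_nonneg (K i)).posSemidef.isHermitian).nonneg_mul_self

theorem sum_mulLeftRight_le_one (hK : ∀ i, (K i).IsHermitian) (hsum : ∑ i, K i * K i = 1) :
    ∑ i, LinearMap.mulLeftRight 𝕜 (K i, K i) ≤ 1 := by
  set C : ι → Module.End 𝕜 (Matrix n n 𝕜) :=
    fun i => LinearMap.mulLeft 𝕜 (K i) - LinearMap.mulRight 𝕜 (K i)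
  have hC : ∀ i, 0 ≤ C i * C i := fun i =>
    ((isSymmetric_mulLeft (hK i)).sub (isSymmetric_mulRight (hK i))).nonneg_mul_self
  have hcomm : 1 - ∑ i, LinearMap.mulLeftRight 𝕜 (K i, K i) = (2⁻¹ : 𝕜) • ∑ i, C i * C i := by
    ext x : 1
    simp only [C, LinearMap.sub_apply, LinearMap.smul_apply, LinearMap.sum_apply,
      Module.End.mul_apply, Module.End.one_apply, LinearMap.mulLeft_apply,
      LinearMap.mulRight_apply, LinearMap.mulLeftRight_apply, mul_sub, sub_mul,
      Finset.sum_sub_distrib]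
    have hl : ∑ i, K i * (K i * x) = x := by
      simp only [← mul_assoc, ← Finset.sum_mul, hsum, one_mul]
    have hr : ∑ i, x * K i * K i = x := by
      simp only [mul_assoc, ← Finset.mul_sum, hsum, mul_one]
    rw [hl, hr]
    simp only [mul_assoc]
    module
  rw [LinearMap.le_def, hcomm]
  exact (LinearMap.isPositive_sum _ fun i _ => (LinearMap.nonneg_iff_isPositive _).mp (hC i))
    |>.smul_of_nonneg (by positivity)

theorem _root_.IsBareChannel.shrinksNonFixedPoints {m : ℕ}
    {Φ : Matrix (Fin m) (Fin m) ℂ → Matrix (Fin m) (Fin m) ℂ} (h : IsBareChannel Φ) :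
    ShrinksNonFixedPoints Φ := by
  obtain ⟨k, E, hE, hsum, hΦ⟩ := h
  have hΦ' : Φ = ∑ α, LinearMap.mulLeftRight ℂ ((hE α).sqrt, (hE α).sqrt) := by
    ext1 ρ
    simp only [hΦ, LinearMap.sum_apply, LinearMap.mulLeftRight_apply]
  rw [hΦ']
  refine LinearMap.shrinksNonFixedPoints_of_nonneg_of_le_one
    (nonneg_sum_mulLeftRight fun α => (hE α).posSemidef_sqrt)
    (sum_mulLeftRight_le_one (fun α => (hE α).posSemidef_sqrt.isHermitian) ?_)
  simp only [PosSemidef.sqrt_mul_self, hsum]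

end Matrix

theorem stmt_6 (n N : ℕ)
    (Φs : Fin N → (Matrix (Fin n) (Fin n) ℂ → Matrix (Fin n) (Fin n) ℂ))
    (hbare : ∀ i, IsBareChannel (Φs i))
    (Φ : Matrix (Fin n) (Fin n) ℂ → Matrix (Fin n) (Fin n) ℂ)
    (hΦ : Φ = (List.ofFn Φs).foldl (fun f g => g ∘ f) id)
    (ρ : Matrix (Fin n) (Fin n) ℂ) (hρ : ρ ≠ 0)
    (lam : ℂ) (hlam : ‖lam‖ = 1)
    (heig : Φ ρ = lam • ρ) :
    lam = 1 := by
  let := hilbertSchmidtNormedAddCommGroup (𝕜 := ℂ) (n := Fin n)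
  let := hilbertSchmidtInnerProductSpace (𝕜 := ℂ) (n := Fin n)
  have hshrink : ShrinksNonFixedPoints Φ := by
    rw [hΦ]
    refine ShrinksNonFixedPoints.foldl_comp (fun f hf => ?_) ShrinksNonFixedPoints.id
    obtain ⟨i, rfl⟩ := List.mem_ofFn.mp hf
    exact (hbare i).shrinksNonFixedPoints
  exact hshrink.eq_one_of_apply_eq_smul hρ hlam heig
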